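/- arXiv:2305.04050 — 10 statements merged into one kernel-verified Lean document; each statement's English description precedes it below -/
import Mathlib

section
/- Under the ALPHA update rule T_i = T_{i-1} · ( (Y_i/μ_i)·(η_i - μ_i)/(u_i - μ_i) + (u_i - η_i)/(u_i - μ_i) ) with 0 < μ_i < η_i < u_i, if E[Y_i | Y_1,...,Y_{i-1}] ≤ μ_i for all i, then (T_i) is a supermartingale: E[T_i | T_0,...,T_{i-1}] ≤ T_{i-1}. -/
open MeasureTheory

/-- Under the ALPHA update rule with predictable `0 < μ i < η i < u i`, if
`E[Y (i+1) | ℱ i] ≤ μ (i+1)` for all `i`, then `T` is a supermartingale: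
`E[T (i+1) | ℱ i] ≤ T i`. -/
theorem alpha_T_supermartingale {Ω : Type*} {m0 : MeasurableSpace Ω} {μ : Measure Ω}
    [IsProbabilityMeasure μ] {ℱ : Filtration ℕ m0}
    (Y μc ηc uc : ℕ → Ω → ℝ) (T : ℕ → Ω → ℝ)
    (hYadapted : ∀ i, StronglyMeasurable[ℱ i] (Y i))
    (hYint : ∀ i, Integrable (Y i) μ)
    (hTint : ∀ i, Integrable (T i) μ)
    (hpredμ : ∀ i, StronglyMeasurable[ℱ i] (μc (i + 1)))
    (hpredη : ∀ i, StronglyMeasurable[ℱ i] (ηc (i + 1)))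
    (hpredu : ∀ i, StronglyMeasurable[ℱ i] (uc (i + 1)))
    (hY : ∀ i ω, 0 ≤ Y i ω)
    (hμpos : ∀ i ω, 0 < μc i ω)
    (hμη : ∀ i ω, μc i ω < ηc i ω)
    (hηu : ∀ i ω, ηc i ω < uc i ω)
    (hcond : ∀ i, (μ[Y (i + 1) | ℱ i]) ≤ᵐ[μ] μc (i + 1))
    (hT0 : ∀ ω, T 0 ω = 1)
    (hTrec : ∀ i ω, T (i + 1) ω =
      T i ω * ((Y (i + 1) ω / μc (i + 1) ω) *
          ((ηc (i + 1) ω - μc (i + 1) ω) / (uc (i + 1) ω - μc (i + 1) ω))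
        + (uc (i + 1) ω - ηc (i + 1) ω) / (uc (i + 1) ω - μc (i + 1) ω))) :
    ∀ i, (μ[T (i + 1) | ℱ i]) ≤ᵐ[μ] T i := by
  -- positivity facts
  have hμu : ∀ i ω, μc i ω < uc i ω := fun i ω => (hμη i ω).trans (hηu i ω)
  have huμpos : ∀ i ω, 0 < uc i ω - μc i ω := fun i ω => sub_pos.2 (hμu i ω)
  have hημpos : ∀ i ω, 0 < ηc i ω - μc i ω := fun i ω => sub_pos.2 (hμη i ω)
  have huηpos : ∀ i ω, 0 < uc i ω - ηc i ω := fun i ω => sub_pos.2 (hηu i ω)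
  -- T is adapted
  have hTmeas : ∀ j, StronglyMeasurable[ℱ j] (T j) := by
    intro j
    induction j with
    | zero =>
      have : T 0 = fun _ => (1 : ℝ) := funext hT0
      rw [this]; exact stronglyMeasurable_const
    | succ n ih =>
      have : T (n + 1) = fun ω => T n ω * ((Y (n + 1) ω / μc (n + 1) ω) *
          ((ηc (n + 1) ω - μc (n + 1) ω) / (uc (n + 1) ω - μc (n + 1) ω))
        + (uc (n + 1) ω - ηc (n + 1) ω) / (uc (n + 1) ω - μc (n + 1) ω)) :=
        funext (hTrec n)
      rw [this]
      have hle := ℱ.mono (Nat.le_succ n)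
      have mT := (ih.mono hle).measurable
      have mY := (hYadapted (n + 1)).measurable
      have mμ := ((hpredμ n).mono hle).measurable
      have mη := ((hpredη n).mono hle).measurable
      have mu := ((hpredu n).mono hle).measurable
      exact (mT.mul (((mY.div mμ).mul ((mη.sub mμ).div (mu.sub mμ))).add
        ((mu.sub mη).div (mu.sub mμ)))).stronglyMeasurable
  -- T is nonnegative
  have hTnn : ∀ j ω, 0 ≤ T j ω := by
    intro j
    induction j with
    | zero => intro ω; rw [hT0]; norm_num
    | succ n ih =>
      intro ω
      rw [hTrec n ω]
      have h1 : 0 ≤ Y (n + 1) ω / μc (n + 1) ω :=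
        div_nonneg (hY _ ω) (hμpos _ ω).le
      have h2 : 0 ≤ (ηc (n + 1) ω - μc (n + 1) ω) / (uc (n + 1) ω - μc (n + 1) ω) :=
        div_nonneg (hημpos _ ω).le (huμpos _ ω).le
      have h3 : 0 ≤ (uc (n + 1) ω - ηc (n + 1) ω) / (uc (n + 1) ω - μc (n + 1) ω) :=
        div_nonneg (huηpos _ ω).le (huμpos _ ω).le
      exact mul_nonneg (ih ω) (add_nonneg (mul_nonneg h1 h2) h3)
  intro i
  set A : Ω → ℝ := fun ω => T i ω *
    ((ηc (i + 1) ω - μc (i + 1) ω) / (uc (i + 1) ω - μc (i + 1) ω) / μc (i + 1) ω) with hA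
  set B : Ω → ℝ := fun ω => T i ω *
    ((uc (i + 1) ω - ηc (i + 1) ω) / (uc (i + 1) ω - μc (i + 1) ω)) with hB
  have hAnn : ∀ ω, 0 ≤ A ω := fun ω =>
    mul_nonneg (hTnn i ω) (div_nonneg (div_nonneg (hημpos _ ω).le (huμpos _ ω).le) (hμpos _ ω).le)
  have hAmeas : StronglyMeasurable[ℱ i] A :=
    ((hTmeas i).measurable.mul ((((hpredη i).measurable.sub (hpredμ i).measurable).div
      ((hpredu i).measurable.sub (hpredμ i).measurable)).div
      (hpredμ i).measurable)).stronglyMeasurable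
  have hBmeas : StronglyMeasurable[ℱ i] B :=
    ((hTmeas i).measurable.mul (((hpredu i).measurable.sub (hpredη i).measurable).div
      ((hpredu i).measurable.sub (hpredμ i).measurable))).stronglyMeasurable
  -- decomposition
  have hdecomp : T (i + 1) = A * Y (i + 1) + B := by
    funext ω
    simp only [hA, hB, Pi.add_apply, Pi.mul_apply]
    rw [hTrec i ω]
    ring
  -- B is integrable
  have hBint : Integrable B μ := by
    refine (hTint i).mono ((hBmeas.mono (ℱ.le i)).aestronglyMeasurable) (Filter.Eventually.of_forall fun ω => ?_)
    simp only [hB, Real.norm_eq_abs, abs_mul]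
    have hr : (uc (i + 1) ω - ηc (i + 1) ω) / (uc (i + 1) ω - μc (i + 1) ω) ≤ 1 :=
      (div_le_one (huμpos _ ω)).2 (by linarith [hμη (i + 1) ω])
    have hr0 : 0 ≤ (uc (i + 1) ω - ηc (i + 1) ω) / (uc (i + 1) ω - μc (i + 1) ω) :=
      div_nonneg (huηpos _ ω).le (huμpos _ ω).le
    calc |T i ω| * |(uc (i + 1) ω - ηc (i + 1) ω) / (uc (i + 1) ω - μc (i + 1) ω)|
        ≤ |T i ω| * 1 := by
          apply mul_le_mul_of_nonneg_left _ (abs_nonneg _)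
          rw [abs_of_nonneg hr0]; exact hr
      _ = |T i ω| := mul_one _
  have hAYint : Integrable (A * Y (i + 1)) μ := by
    have : A * Y (i + 1) = T (i + 1) - B := by rw [hdecomp]; ring
    rw [this]
    exact (hTint (i + 1)).sub hBint
  -- conditional expectation computation
  have h1 : μ[T (i + 1) | ℱ i] =ᵐ[μ] μ[A * Y (i + 1) | ℱ i] + μ[B | ℱ i] := by
    rw [hdecomp]
    exact condExp_add hAYint hBint _
  have h2 : μ[A * Y (i + 1) | ℱ i] =ᵐ[μ] A * μ[Y (i + 1) | ℱ i] :=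
    condExp_mul_of_stronglyMeasurable_left hAmeas hAYint (hYint (i + 1))
  have h3 : μ[B | ℱ i] =ᵐ[μ] B :=
    Filter.EventuallyEq.of_eq (condExp_of_stronglyMeasurable (ℱ.le i) hBmeas hBint)
  have hle : (A * μ[Y (i + 1) | ℱ i] + B : Ω → ℝ) ≤ᵐ[μ] T i := by
    filter_upwards [hcond i] with ω hω
    have hμne : μc (i + 1) ω ≠ 0 := (hμpos _ ω).ne'
    have huμne : uc (i + 1) ω - μc (i + 1) ω ≠ 0 := (huμpos _ ω).ne'
    have key : A ω * μc (i + 1) ω + B ω = T i ω := by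
      simp only [hA, hB]
      rw [mul_assoc, div_mul_cancel₀ _ hμne, ← mul_add, ← add_div]
      have hsum : ηc (i + 1) ω - μc (i + 1) ω + (uc (i + 1) ω - ηc (i + 1) ω)
          = uc (i + 1) ω - μc (i + 1) ω := by ring
      rw [hsum, div_self huμne, mul_one]
    have : A ω * (μ[Y (i + 1) | ℱ i]) ω ≤ A ω * μc (i + 1) ω :=
      mul_le_mul_of_nonneg_left hω (hAnn ω)
    simp only [Pi.add_apply, Pi.mul_apply]
    linarith [key]
  calc μ[T (i + 1) | ℱ i] =ᵐ[μ] μ[A * Y (i + 1) | ℱ i] + μ[B | ℱ i] := h1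
    _ =ᵐ[μ] A * μ[Y (i + 1) | ℱ i] + B := h2.add h3
    _ ≤ᵐ[μ] T i := hle
end

section
/- Let β : C → ℝ be coefficients over a finite ballot-type set C, let B be a finite list of ballots with type function τ : B → C, let v(c) = |{b ∈ B : τ(b) = c}|, let d ∈ ℝ, and let z = min_{c∈C} β_c. Assume z - d/|B| < 0. Define a(b) = -(β_{τ(b)} - z)/(2(z - d/|B|)). Then a is non-negative, and Σ_{c∈C} β_c · v(c) > d if and only if (1/|B|)·Σ_{b∈B} a(b) > 1/2. -/
lemma sum_map_count_aux {C : Type*} [Fintype C] [DecidableEq C]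
    (β : C → ℝ) (B : List C) :
    (B.map β).sum = ∑ c : C, β c * (B.count c : ℝ) := by
  induction B with
  | nil => simp
  | cons h t ih =>
      simp only [List.map_cons, List.sum_cons, ih, List.count_cons]
      push_cast
      have step : ∀ x : C, β x * ((t.count x : ℝ) + if (h == x) = true then 1 else 0)
          = β x * (t.count x : ℝ) + if x = h then β x else 0 := by
        intro x
        by_cases hx : x = h
        · subst hx; simp; ring
        · simp [beq_iff_eq, hx, Ne.symm hx]
      rw [Finset.sum_congr rfl fun x _ => step x, Finset.sum_add_distrib,
        Finset.sum_ite_eq' Finset.univ h β]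
      simp [add_comm]

/-- The generic reduction from a linear inequality over vote tallies to a SHANGRLA
assertion: with `z = min_c β c` and `z - d/|B| < 0`, the assorter
`a b = -(β b - z) / (2 (z - d/|B|))` is non-negative, and
`Σ_c β c · v c > d` iff the mean of `a` over the ballots exceeds `1/2`. -/
theorem linear_ineq_to_assertion {C : Type*} [Fintype C] [Nonempty C] [DecidableEq C]
    (β : C → ℝ) (B : List C) (hB : B ≠ []) (d : ℝ)
    (z : ℝ) (hz : z = Finset.univ.inf' Finset.univ_nonempty β)
    (hneg : z - d / (B.length : ℝ) < 0)
    (a : C → ℝ) (ha : ∀ b, a b = -(β b - z) / (2 * (z - d / (B.length : ℝ)))) :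
    (∀ b, 0 ≤ a b) ∧
      ((∑ c : C, β c * (B.count c : ℝ)) > d ↔
        (1 / (B.length : ℝ)) * ((B.map a).sum) > 1 / 2) := by
  have hn : (0 : ℝ) < (B.length : ℝ) := by
    have := List.length_pos_iff.mpr hB
    exact_mod_cast this
  set k : ℝ := z - d / (B.length : ℝ) with hk
  have hzle : ∀ b, z ≤ β b := by
    intro b
    rw [hz]
    exact Finset.inf'_le β (Finset.mem_univ b)
  have hpos : ∀ b, 0 ≤ a b := by
    intro b
    rw [ha b, div_nonneg_iff]
    right
    constructor <;> [skip; linarith]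
    linarith [hzle b]
  refine ⟨hpos, ?_⟩
  have hlen : (B.length : ℝ) = ∑ c : C, (B.count c : ℝ) := by
    have := sum_map_count_aux (fun _ => (1:ℝ)) B
    simpa using this
  have hsum : (B.map a).sum = ((B.length : ℝ) * z - (B.map β).sum) / (2 * k) := by
    rw [sum_map_count_aux a B, sum_map_count_aux β B, hlen, Finset.sum_mul,
      ← Finset.sum_sub_distrib, Finset.sum_div]
    apply Finset.sum_congr rfl
    intro c _
    rw [ha c]
    have h2k : (2 * k) ≠ 0 := by intro h; nlinarith
    field_simp
    ring
  rw [← sum_map_count_aux β B]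
  set S := (B.map β).sum with hS
  have hk2 : 2 * k * (B.length : ℝ) < 0 := by nlinarith
  have hkn : k * (B.length : ℝ) = (B.length : ℝ) * z - d := by
    rw [hk]; field_simp
  have key : (1 / (B.length : ℝ)) * ((B.map a).sum)
      = ((B.length : ℝ) * z - S) / (2 * k * (B.length : ℝ)) := by
    rw [hsum, one_div_mul_eq_div, div_div]
  have e : (1:ℝ)/2 * (2 * k * (B.length:ℝ)) = (B.length:ℝ) * z - d := by
    rw [show (1:ℝ)/2 * (2 * k * (B.length:ℝ)) = k * (B.length:ℝ) from by ring, hkn]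
  rw [key, gt_iff_lt, gt_iff_lt, lt_div_iff_of_neg hk2]
  constructor
  · intro h; rw [e]; linarith
  · intro h; rw [e] at h; linarith
end

section
/- Let a : B → [0,∞) be an assorter over a finite set of ballots B partitioned into batches B_1,...,B_d. Let a_rep(B_i) and a_true(B_i) denote the reported and true mean of a over batch B_i, and let a_rep(B), a_true(B) denote the overall reported and true means (weighted by batch sizes). Define M = a_rep(B) - 1/2, w = max_j a_rep(B_j), and the Batchcomp assorter A(B_i) = 1/2 + (M + a_true(B_i) - a_rep(B_i))/(2(w - M)). Assume w > M > 0. Then A(B_i) ≥ 0 for every batch B_i. -/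
lemma half_add_div_two_mul_sub_eq {w M t r : ℝ} (hwM : M ≠ w) :
    1 / 2 + (M + t - r) / (2 * (w - M)) = (w + t - r) / (2 * (w - M)) := by
  have : w - M ≠ 0 := sub_ne_zero.mpr hwM.symm
  field_simp
  ring

theorem batchcomp_assorter_nonneg_general {ι : Type*} [Fintype ι] [Nonempty ι]
    (arep atrue : ι → ℝ) (htrue : ∀ i, 0 ≤ atrue i)
    (w : ℝ) (hw : w = Finset.univ.sup' Finset.univ_nonempty arep)
    (M : ℝ)
    (hwM : M < w) :
    ∀ i, 0 ≤ 1 / 2 + (M + atrue i - arep i) / (2 * (w - M)) := by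
  intro i
  have hrep : arep i ≤ w := hw ▸ Finset.le_sup' arep (Finset.mem_univ i)
  rw [half_add_div_two_mul_sub_eq hwM.ne]
  exact div_nonneg (by linarith [htrue i]) (by linarith)

/-- The Batchcomp assorter `A B_i = 1/2 + (M + a_true B_i - a_rep B_i)/(2(w - M))`
is non-negative on every batch, where `M = a_rep(B) - 1/2`, `w = max_j a_rep B_j`,
assuming `w > M > 0`. -/
theorem batchcomp_assorter_nonneg {ι : Type*} [Fintype ι] [Nonempty ι]
    (size : ι → ℕ) (hsize : ∀ i, 0 < size i)
    (arep atrue : ι → ℝ) (htrue : ∀ i, 0 ≤ atrue i)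
    (n : ℝ) (hn : n = ∑ i, (size i : ℝ))
    (w : ℝ) (hw : w = Finset.univ.sup' Finset.univ_nonempty arep)
    (M : ℝ) (hM : M = (1 / n) * (∑ i, (size i : ℝ) * arep i) - 1 / 2)
    (hwM : M < w) (hMpos : 0 < M) :
    ∀ i, 0 ≤ 1 / 2 + (M + atrue i - arep i) / (2 * (w - M)) :=
  batchcomp_assorter_nonneg_general arep atrue htrue w hw M hwM
end

section
/- With the Batchcomp assorter A defined by A(B_i) = 1/2 + (M + a_true(B_i) - a_rep(B_i))/(2(w - M)) where M = a_rep(B) - 1/2 and w - M > 0, the size-weighted mean of A over all batches satisfies A(B) = 1/2 + (a_true(B) - 1/2)/(2(w - M)). Consequently, a_true(B) ≤ 1/2 implies A(B) ≤ 1/2, and a_true(B) > 1/2 implies A(B) > 1/2. -/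
/-!
The size-weighted mean is linear in the per-batch values and fixes constants, so averaging
`A(B_i) = 1/2 + (M + a_true(B_i) - a_rep(B_i)) / (2(w - M))` gives
`A(B) = 1/2 + (M + a_true(B) - a_rep(B)) / (2(w - M))`, and `M - a_rep(B) = -1/2` by the choice of `M`.
The two implications follow because `2(w - M) > 0`.
-/

open Finset

section WeightedMean

variable {ι : Type*} [Fintype ι]

noncomputable def weightedMean (w f : ι → ℝ) : ℝ :=
  (1 / ∑ i, w i) * ∑ i, w i * f i

variable {w : ι → ℝ}

theorem weightedMean_const (hw : ∑ i, w i ≠ 0) (c : ℝ) :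
    weightedMean w (fun _ => c) = c := by
  rw [weightedMean, ← sum_mul]
  field_simp

theorem weightedMean_add (f g : ι → ℝ) : weightedMean w (fun i => f i + g i) =
    weightedMean w f + weightedMean w g := by
  simp only [weightedMean, mul_add, sum_add_distrib]

theorem weightedMean_sub (f g : ι → ℝ) : weightedMean w (fun i => f i - g i) =
    weightedMean w f - weightedMean w g := by
  simp only [weightedMean, mul_sub, sum_sub_distrib]

theorem weightedMean_div_const (f : ι → ℝ) (d : ℝ) :
    weightedMean w (fun i => f i / d) = weightedMean w f / d := by
  simp only [weightedMean, mul_div_assoc', ← sum_div]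

end WeightedMean

/-- The size-weighted mean of the Batchcomp assorter satisfies
`A(B) = 1/2 + (a_true(B) - 1/2)/(2(w - M))`; consequently `a_true(B) ≤ 1/2` implies
`A(B) ≤ 1/2` and `a_true(B) > 1/2` implies `A(B) > 1/2`. -/
theorem batchcomp_mean_identity {ι : Type*} [Fintype ι]
    (size : ι → ℕ) (arep atrue : ι → ℝ)
    (n : ℝ) (hn : n = ∑ i, (size i : ℝ)) (hnpos : 0 < n)
    (arepB atrueB : ℝ)
    (harepB : arepB = (1 / n) * ∑ i, (size i : ℝ) * arep i)
    (hatrueB : atrueB = (1 / n) * ∑ i, (size i : ℝ) * atrue i)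
    (M w : ℝ) (hM : M = arepB - 1 / 2) (hwM : 0 < w - M)
    (A : ι → ℝ) (hA : ∀ i, A i = 1 / 2 + (M + atrue i - arep i) / (2 * (w - M)))
    (AB : ℝ) (hAB : AB = (1 / n) * ∑ i, (size i : ℝ) * A i) :
    AB = 1 / 2 + (atrueB - 1 / 2) / (2 * (w - M)) ∧
      (atrueB ≤ 1 / 2 → AB ≤ 1 / 2) ∧
      (1 / 2 < atrueB → 1 / 2 < AB) := by
  subst hn
  set s : ι → ℝ := fun i => (size i : ℝ)
  have hs : ∑ i, s i ≠ 0 := hnpos.ne'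
  replace hA : A = fun i => 1 / 2 + (M + atrue i - arep i) / (2 * (w - M)) := funext hA
  have hmean : AB = 1 / 2 + (M + atrueB - arepB) / (2 * (w - M)) := by
    change AB = weightedMean s A at hAB
    change arepB = weightedMean s arep at harepB
    change atrueB = weightedMean s atrue at hatrueB
    rw [hAB, hA, harepB, hatrueB]
    simp only [weightedMean_add, weightedMean_sub, weightedMean_div_const, weightedMean_const hs]
  have hidentity : AB = 1 / 2 + (atrueB - 1 / 2) / (2 * (w - M)) := by
    rw [hmean, hM]; ring_nf
  have hd : 0 < 2 * (w - M) := by linarith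
  refine ⟨hidentity, fun h => ?_, fun h => ?_⟩
  · linarith [div_nonpos_of_nonpos_of_nonneg (sub_nonpos.2 h) hd.le]
  · linarith [div_pos (sub_pos.2 h) hd]
end

section
/- Let seats be allocated to parties by the D'Hondt method: party p with true vote count v(p) receives s(p) seats where the S cells with largest values v(p)/k (k = 1,...,S) across all parties are selected, with no ties. Let s_rep be any reported seat allocation with Σ_p s_rep(p) = S. If for two parties p₁ ≠ p₂ the inequality v(p₁)/(s_rep(p₁)+1) < v(p₂)/s_rep(p₂) holds, then it is not the case that both s_rep(p₁) < s(p₁) and s_rep(p₂) > s(p₂). -/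
theorem dhondt_move_seat_general {P : Type*} [Fintype P]
    (v : P → ℝ) (S : ℕ) (s : P → ℕ)
    (hdom : ∀ p q : P, ∀ k j : ℕ, 1 ≤ k → k ≤ s p → s q < j → j ≤ S →
      v q / (j : ℝ) < v p / (k : ℝ))
    (srep : P → ℕ) (hrepsum : ∑ p, srep p = S)
    (p₁ p₂ : P)
    (hineq : v p₁ / ((srep p₁ : ℝ) + 1) < v p₂ / (srep p₂ : ℝ)) :
    ¬(srep p₁ < s p₁ ∧ s p₂ < srep p₂) := by
  rintro ⟨h₁, h₂⟩
  have hle : srep p₂ ≤ S :=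
    hrepsum ▸ Finset.single_le_sum (fun p _ => Nat.zero_le (srep p)) (Finset.mem_univ p₂)
  -- Cell `(p₁, srep p₁ + 1)` is colored and cell `(p₂, srep p₂)` is not.
  have hcolored := hdom p₁ p₂ (srep p₁ + 1) (srep p₂) (Nat.le_add_left 1 _) h₁ h₂ hle
  push_cast at hcolored
  exact lt_asymm hineq hcolored

/-- For D'Hondt seat allocation (formalized by the property that every colored cell
`v p / k`, `1 ≤ k ≤ s p`, is strictly larger than every uncolored cell `v q / j`,
`s q < j ≤ S`), if `v p₁ / (s_rep p₁ + 1) < v p₂ / s_rep p₂` for a reported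
allocation `s_rep` summing to `S`, then it is not the case that both
`s_rep p₁ < s p₁` and `s_rep p₂ > s p₂`. -/
theorem dhondt_move_seat {P : Type*} [Fintype P]
    (v : P → ℝ) (S : ℕ) (s : P → ℕ)
    (hsum : ∑ p, s p = S)
    (hdom : ∀ p q : P, ∀ k j : ℕ, 1 ≤ k → k ≤ s p → s q < j → j ≤ S →
      v q / (j : ℝ) < v p / (k : ℝ))
    (srep : P → ℕ) (hrepsum : ∑ p, srep p = S)
    (p₁ p₂ : P) (hne : p₁ ≠ p₂) (hs₂ : 1 ≤ srep p₂)
    (hineq : v p₁ / ((srep p₁ : ℝ) + 1) < v p₂ / (srep p₂ : ℝ)) :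
    ¬(srep p₁ < s p₁ ∧ s p₂ < srep p₂) :=
  dhondt_move_seat_general v S s hdom srep hrepsum p₁ p₂ hineq
end

section
/- Let n be the total number of ballots, v(p) the number of ballots for party p, v(invalid) the number of invalid ballots, and 0 < t < 1 the electoral threshold. Define the assorter a(b) = 1/(2t) if b is for p, 1/2 if b is invalid, 0 otherwise. Then (1/n)·Σ_{b∈B} a(b) > 1/2 if and only if v(p) > t·(n - v(invalid)). -/
/-- The "above threshold" assorter (`1/(2t)` on ballots for `p`, `1/2` on invalid
ballots, `0` otherwise) has mean exceeding `1/2` iff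
`v p > t · (n - v invalid)`, i.e. party `p` got more than a `t`-share of the
valid votes. A ballot is modeled as `Option P`, `none` being an invalid ballot. -/
theorem above_threshold_assorter {P : Type*} [DecidableEq P]
    (B : List (Option P)) (hB : B ≠ []) (p : P)
    (t : ℝ) (ht0 : 0 < t) (ht1 : t < 1)
    (a : Option P → ℝ)
    (ha : ∀ b, a b = if b = some p then 1 / (2 * t) else if b = none then 1 / 2 else 0) :
    (1 / (B.length : ℝ)) * ((B.map a).sum) > 1 / 2 ↔
      (B.count (some p) : ℝ) > t * ((B.length : ℝ) - (B.count (none : Option P) : ℝ)) := by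
  have hsum : ∀ L : List (Option P), (L.map a).sum =
      (L.count (some p) : ℝ) * (1 / (2 * t)) + (L.count (none : Option P) : ℝ) * (1 / 2) := by
    intro L
    induction L with
    | nil => simp
    | cons b bs ih =>
      simp only [List.map_cons, List.sum_cons, List.count_cons, ih, ha b]
      rcases b with _ | q
      · simp; ring
      · by_cases h : q = p
        · subst h; simp; ring
        · simp [h, Option.some_inj]
  have hn : (0 : ℝ) < (B.length : ℝ) := by
    have := List.length_pos_iff.mpr hB
    exact_mod_cast this
  have key : ((B.count (some p) : ℝ)) * (1 / (2 * t)) + (B.count (none : Option P) : ℝ) * (1 / 2)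
      = ((B.count (some p) : ℝ) + t * (B.count (none : Option P) : ℝ)) / (2 * t) := by
    field_simp
  rw [hsum B, key, gt_iff_lt, gt_iff_lt, div_mul_eq_mul_div, one_mul, lt_div_iff₀ hn,
    lt_div_iff₀ (by positivity : (0:ℝ) < 2 * t)]
  constructor <;> intro h <;> nlinarith
end

section
/- Let 0 < t < 1 and define the assorter a(b) = 0 if b is for party p, 1/2 if b is invalid, and 1/(2(1-t)) otherwise. Then (1/n)·Σ_{b∈B} a(b) > 1/2 if and only if the votes for all parties other than p exceed (1-t) times the number of valid votes, i.e., v(p) < t·(n - v(invalid)). -/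
lemma sum_assorter {P : Type*} [DecidableEq P] (p : P) (t : ℝ)
    (a : Option P → ℝ)
    (ha : ∀ b, a b = if b = some p then 0 else if b = none then 1 / 2 else 1 / (2 * (1 - t)))
    (B : List (Option P)) :
    (B.map a).sum = (B.count (none : Option P) : ℝ) * (1 / 2)
      + ((B.length : ℝ) - (B.count (some p) : ℝ) - (B.count (none : Option P) : ℝ))
          * (1 / (2 * (1 - t))) := by
  induction B with
  | nil => simp
  | cons b B ih =>
    simp only [List.map_cons, List.sum_cons, ih, List.count_cons, List.length_cons, ha b]
    by_cases h1 : b = some p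
    · have h2 : b ≠ none := by simp [h1]
      simp [h1, h2]
    · by_cases h2 : b = none
      · simp [h1, h2]; push_cast; ring
      · simp [h1, h2, beq_iff_eq]; push_cast; ring

/-- The "below threshold" assorter (`0` on ballots for `p`, `1/2` on invalid ballots,
`1/(2(1-t))` otherwise) has mean exceeding `1/2` iff `v p < t · (n - v invalid)`,
i.e. party `p` is strictly below the electoral threshold `t`. -/
theorem below_threshold_assorter {P : Type*} [DecidableEq P]
    (B : List (Option P)) (hB : B ≠ []) (p : P)
    (t : ℝ) (ht0 : 0 < t) (ht1 : t < 1)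
    (a : Option P → ℝ)
    (ha : ∀ b, a b = if b = some p then 0 else if b = none then 1 / 2 else 1 / (2 * (1 - t))) :
    (1 / (B.length : ℝ)) * ((B.map a).sum) > 1 / 2 ↔
      (B.count (some p) : ℝ) < t * ((B.length : ℝ) - (B.count (none : Option P) : ℝ)) := by
  have hn : (0:ℝ) < B.length := by
    have := List.length_pos_iff.mpr hB
    exact_mod_cast this
  have h1t : (0:ℝ) < 1 - t := by linarith
  rw [sum_assorter p t a ha B]
  set n := (B.length : ℝ)
  set cp := (B.count (some p) : ℝ)
  set cn := (B.count (none : Option P) : ℝ)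
  rw [gt_iff_lt, one_div_mul_eq_div, lt_div_iff₀ hn]
  have hd : (0:ℝ) < 2 * (1 - t) := by positivity
  have key : cn * (1/2) + (n - cp - cn) * (1 / (2 * (1-t))) - 1/2 * n
      = (t * (n - cn) - cp) / (2 * (1-t)) := by field_simp; ring
  constructor <;> intro h
  · have h2 : 0 < (t * (n - cn) - cp) / (2 * (1-t)) := by rw [← key]; linarith
    rw [lt_div_iff₀ hd] at h2
    linarith
  · have h2 : (0:ℝ) * (2*(1-t)) < t * (n - cn) - cp := by linarith
    rw [← lt_div_iff₀ hd] at h2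
    linarith [key]
end

section
/- Let s_rep(p₁), s_rep(p₂) ≥ 1 and define the move-seat assorter a(b) = 1/2 + (s_rep(p₁)+1)/(2·s_rep(p₂)) if b is for p₂, 0 if b is for p₁, and 1/2 otherwise. Then (1/n)·Σ_{b∈B} a(b) > 1/2 if and only if v(p₂)/s_rep(p₂) > v(p₁)/(s_rep(p₁)+1), where v(p) counts ballots for party p. -/
/-!
Off ballots for `p₁` and `p₂` the assorter is `1/2`, so its total over `B` is
`n/2 + v(p₂)·(s₁+1)/(2 s₂) - v(p₁)/2`. The mean therefore exceeds `1/2` exactly when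
`v(p₂)·(s₁+1)/s₂ > v(p₁)`, which is the D'Hondt move-seat condition after dividing by `s₁ + 1`.
-/

theorem List.sum_map_ite_ite_half {α : Type*} [DecidableEq α] {x y : α} (hxy : x ≠ y) (u : ℝ)
    (l : List α) :
    (l.map fun b => if b = y then 1 / 2 + u else if b = x then 0 else 1 / 2).sum =
      l.length / 2 + (l.count y * u - l.count x / 2) := by
  rw [List.sum_map_ite_eq, List.sum_map_ite_eq, List.map_const', List.sum_replicate]
  simp only [if_neg hxy.symm, nsmul_eq_mul]
  ring

theorem one_div_mul_half_add_gt_half_iff {n t : ℝ} (hn : 0 < n) :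
    1 / n * (n / 2 + t) > 1 / 2 ↔ 0 < t := by
  rw [one_div_mul_eq_div, gt_iff_lt, lt_div_iff₀ hn]
  constructor <;> intro h <;> linarith

theorem half_lt_mul_div_iff_div_lt_div {a c t s : ℝ} (ht : 0 < t) :
    a / 2 < c * (t / (2 * s)) ↔ a / t < c / s := by
  have h : c * (t / (2 * s)) = c / s * t / 2 := by ring
  rw [h, div_lt_div_iff_of_pos_right two_pos, div_lt_iff₀ ht]

theorem move_seat_assorter_general {P : Type*} [DecidableEq P]
    (B : List (Option P)) (hB : B ≠ []) (p₁ p₂ : P) (hp : p₁ ≠ p₂)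
    (s₁ s₂ : ℕ)
    (a : Option P → ℝ)
    (ha : ∀ b, a b = if b = some p₂ then 1 / 2 + ((s₁ : ℝ) + 1) / (2 * (s₂ : ℝ))
      else if b = some p₁ then 0 else 1 / 2) :
    (1 / (B.length : ℝ)) * ((B.map a).sum) > 1 / 2 ↔
      (B.count (some p₂) : ℝ) / (s₂ : ℝ) > (B.count (some p₁) : ℝ) / ((s₁ : ℝ) + 1) := by
  have hn : (0 : ℝ) < B.length := by exact_mod_cast List.length_pos_iff.mpr hB
  rw [funext ha, List.sum_map_ite_ite_half (Option.some_injective _ |>.ne hp),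
    one_div_mul_half_add_gt_half_iff hn, sub_pos, gt_iff_lt,
    half_lt_mul_div_iff_div_lt_div (by positivity)]
  -- the sides differ only in the `BEq (Option P)` instance that `List.count` uses
  congr!

/-- The move-seat assorter (`1/2 + (s_rep p₁ + 1)/(2 s_rep p₂)` on ballots for `p₂`,
`0` on ballots for `p₁`, `1/2` otherwise) has mean exceeding `1/2` iff
`v p₂ / s_rep p₂ > v p₁ / (s_rep p₁ + 1)`. -/
theorem move_seat_assorter {P : Type*} [DecidableEq P]
    (B : List (Option P)) (hB : B ≠ []) (p₁ p₂ : P) (hp : p₁ ≠ p₂)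
    (s₁ s₂ : ℕ) (hs₁ : 1 ≤ s₁) (hs₂ : 1 ≤ s₂)
    (a : Option P → ℝ)
    (ha : ∀ b, a b = if b = some p₂ then 1 / 2 + ((s₁ : ℝ) + 1) / (2 * (s₂ : ℝ))
      else if b = some p₁ then 0 else 1 / 2) :
    (1 / (B.length : ℝ)) * ((B.map a).sum) > 1 / 2 ↔
      (B.count (some p₂) : ℝ) / (s₂ : ℝ) > (B.count (some p₁) : ℝ) / ((s₁ : ℝ) + 1) :=
  move_seat_assorter_general B hB p₁ p₂ hp s₁ s₂ a ha
end

section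
/- Let a_pes, a_cen : H → [0,∞) be functions on a finite set H, let m = (1/|H|)·Σ_h a_cen(h) - 1/2, and let z > m be a constant with z ≥ max_h a_cen(h). Define A(h) = 1/2 + (m + a_pes(h) - a_cen(h))/(2(z - m)). Then (1/|H|)·Σ_h A(h) > 1/2 if and only if (1/|H|)·Σ_h a_pes(h) > 1/2. -/
/-! Averaging is affine, so the mean of `A` is `1/2 + (m + ā_pes - ā_cen)/(2(z - m))`. By the
definition of the census margin, `m - ā_cen = -1/2`, so this is `1/2 + (ā_pes - 1/2)/(2(z - m))`,
and as `2(z - m) > 0` it exceeds `1/2` exactly when `ā_pes` does. -/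

open Finset
open scoped BigOperators

lemma Fintype.one_div_card_mul_sum_eq_expect {ι K : Type*} [Fintype ι] [Semifield K]
    [CharZero K] (f : ι → K) : 1 / (Fintype.card ι : K) * ∑ i, f i = 𝔼 i, f i := by
  rw [Fintype.expect_eq_sum_div_card, one_div_mul_eq_div]

lemma half_add_div_gt_half_iff {x d : ℝ} (hd : 0 < d) : 1 / 2 + x / d > 1 / 2 ↔ 0 < x := by
  rw [gt_iff_lt, lt_add_iff_pos_right, div_pos_iff_of_pos_right hd]

theorem census_comparison_assorter_iff_general {H : Type*} [Fintype H] [Nonempty H]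
    (apes acen : H → ℝ)
    (m z : ℝ)
    (hm : m = (1 / (Fintype.card H : ℝ)) * (∑ h, acen h) - 1 / 2)
    (hz1 : m < z)
    (A : H → ℝ)
    (hA : ∀ h, A h = 1 / 2 + (m + apes h - acen h) / (2 * (z - m))) :
    (1 / (Fintype.card H : ℝ)) * (∑ h, A h) > 1 / 2 ↔
      (1 / (Fintype.card H : ℝ)) * (∑ h, apes h) > 1 / 2 := by
  simp only [Fintype.one_div_card_mul_sum_eq_expect] at hm ⊢
  have hmeanA : 𝔼 h, A h = 1 / 2 + (𝔼 h, apes h - 1 / 2) / (2 * (z - m)) := by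
    simp only [hA, expect_add_distrib, ← expect_div, expect_sub_distrib, Fintype.expect_const]
    rw [hm]
    ring
  rw [hmeanA, half_add_div_gt_half_iff (by linarith), sub_pos, gt_iff_lt]

/-- The census comparison assorter
`A h = 1/2 + (m + a_pes h - a_cen h)/(2(z - m))`, with `m` the census margin and
`z > m`, `z ≥ max_h a_cen h`, has mean exceeding `1/2` iff the PES assorter `a_pes`
has mean exceeding `1/2`. -/
theorem census_comparison_assorter_iff {H : Type*} [Fintype H] [Nonempty H]
    (apes acen : H → ℝ) (hpes : ∀ h, 0 ≤ apes h) (hcen : ∀ h, 0 ≤ acen h)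
    (m z : ℝ)
    (hm : m = (1 / (Fintype.card H : ℝ)) * (∑ h, acen h) - 1 / 2)
    (hz1 : m < z) (hz2 : ∀ h, acen h ≤ z)
    (A : H → ℝ)
    (hA : ∀ h, A h = 1 / 2 + (m + apes h - acen h) / (2 * (z - m))) :
    (1 / (Fintype.card H : ℝ)) * (∑ h, A h) > 1 / 2 ↔
      (1 / (Fintype.card H : ℝ)) * (∑ h, apes h) > 1 / 2 :=
  census_comparison_assorter_iff_general apes acen m z hm hz1 A hA
end

section
/- In the sample_household subroutine, suppose H¹ is the set of unaudited households, H_PES ⊆ set of households considered by the PES, and the PES surveyed a uniformly random subset of H_PES of fixed size, of which j households lie in H¹. The subroutine, with probability |H_PES ∩ H¹|/|H¹|, returns a uniform element of (surveyed PES households) ∩ H¹, and otherwise returns a uniform element of H¹ \ H_PES. Then every household in H¹ is returned with probability exactly 1/|H¹|. -/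
open Finset

private lemma swap_aux {α : Type*} [DecidableEq α] {Hpes H1 : Finset α} {k j : ℕ} {h h' : α}
    (hh1 : h ∈ Hpes) (hh2 : h ∈ H1) (hh'1 : h' ∈ Hpes) (hh'2 : h' ∈ H1)
    {T : Finset α} (hT : T ⊆ Hpes) (hTk : T.card = k) (hTj : (T ∩ H1).card = j)
    (hhT : h ∈ T) (hh'T : h' ∉ T) :
    (insert h' (T.erase h)) ⊆ Hpes ∧ (insert h' (T.erase h)).card = k ∧
    ((insert h' (T.erase h)) ∩ H1).card = j ∧ h' ∈ insert h' (T.erase h) ∧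
    h ∉ insert h' (T.erase h) := by
  have hne : h ≠ h' := fun e => hh'T (e ▸ hhT)
  have h'ne : h' ∉ T.erase h := fun hm => hh'T (mem_of_mem_erase hm)
  refine ⟨?_, ?_, ?_, mem_insert_self _ _, ?_⟩
  · exact insert_subset hh'1 ((erase_subset _ _).trans hT)
  · rw [card_insert_of_notMem h'ne, card_erase_of_mem hhT, hTk]
    have : 1 ≤ k := hTk ▸ card_pos.mpr ⟨h, hhT⟩
    omega
  · have e1 : (insert h' (T.erase h)) ∩ H1 = insert h' ((T ∩ H1).erase h) := by
      rw [insert_inter_of_mem hh'2, erase_inter]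
    have hnotmem : h' ∉ (T ∩ H1).erase h := fun hm => hh'T (mem_of_mem_inter_left (mem_of_mem_erase hm))
    rw [e1, card_insert_of_notMem hnotmem,
      card_erase_of_mem (mem_inter.mpr ⟨hhT, hh2⟩), hTj]
    have : 1 ≤ j := hTj ▸ card_pos.mpr ⟨h, mem_inter.mpr ⟨hhT, hh2⟩⟩
    omega
  · intro hm
    rcases mem_insert.mp hm with e | hm
    · exact hne e
    · exact (notMem_erase h T) hm

private lemma count_const {α : Type*} [DecidableEq α] {Hpes H1 : Finset α} {k j : ℕ}
    (𝒯 : Finset (Finset α))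
    (h𝒯 : 𝒯 = (Hpes.powersetCard k).filter (fun T => (T ∩ H1).card = j))
    {h h' : α} (hh : h ∈ Hpes ∩ H1) (hh' : h' ∈ Hpes ∩ H1) :
    (𝒯.filter (fun T => h ∈ T)).card = (𝒯.filter (fun T => h' ∈ T)).card := by
  obtain ⟨hh1, hh2⟩ := mem_inter.mp hh
  obtain ⟨hh'1, hh'2⟩ := mem_inter.mp hh'
  by_cases hne : h = h'
  · subst hne; rfl
  subst h𝒯
  have memiff : ∀ (a : α) (T : Finset α),
      T ∈ (((Hpes.powersetCard k).filter (fun T => (T ∩ H1).card = j)).filter (fun T => a ∈ T)) ↔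
      (T ⊆ Hpes ∧ T.card = k ∧ (T ∩ H1).card = j ∧ a ∈ T) := by
    intro a T
    simp only [mem_filter, mem_powersetCard]
    tauto
  refine card_bij' (fun T _ => if h' ∈ T then T else insert h' (T.erase h))
    (fun S _ => if h ∈ S then S else insert h (S.erase h')) ?hi ?hj ?li ?ri
  case hi =>
    intro T hT
    rw [memiff] at hT ⊢
    obtain ⟨h1, h2, h3, h4⟩ := hT
    by_cases hc : h' ∈ T
    · simp only [if_pos hc]; exact ⟨h1, h2, h3, hc⟩
    · simp only [hc, if_false]
      obtain ⟨a, b, c, d, _⟩ := swap_aux hh1 hh2 hh'1 hh'2 h1 h2 h3 h4 hc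
      exact ⟨a, b, c, d⟩
  case hj =>
    intro S hS
    rw [memiff] at hS ⊢
    obtain ⟨h1, h2, h3, h4⟩ := hS
    by_cases hc : h ∈ S
    · simp only [if_pos hc]; exact ⟨h1, h2, h3, hc⟩
    · simp only [hc, if_false]
      obtain ⟨a, b, c, d, _⟩ := swap_aux hh'1 hh'2 hh1 hh2 h1 h2 h3 h4 hc
      exact ⟨a, b, c, d⟩
  case li =>
    intro T hT
    rw [memiff] at hT
    obtain ⟨h1, h2, h3, h4⟩ := hT
    by_cases hc : h' ∈ T
    · simp [hc, h4]
    · obtain ⟨_, _, _, _, hnot⟩ := swap_aux hh1 hh2 hh'1 hh'2 h1 h2 h3 h4 hc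
      have h'ne : h' ∉ T.erase h := fun hm => hc (mem_of_mem_erase hm)
      simp only [hc, if_false, hnot, if_false]
      rw [erase_insert h'ne, insert_erase h4]
  case ri =>
    intro S hS
    rw [memiff] at hS
    obtain ⟨h1, h2, h3, h4⟩ := hS
    by_cases hc : h ∈ S
    · simp [hc, h4]
    · obtain ⟨_, _, _, _, hnot⟩ := swap_aux hh'1 hh'2 hh1 hh2 h1 h2 h3 h4 hc
      have hne2 : h ∉ S.erase h' := fun hm => hc (mem_of_mem_erase hm)
      simp only [hc, if_false, hnot, if_false]
      rw [erase_insert hne2, insert_erase h4]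

private lemma count_total {α : Type*} [DecidableEq α] {Hpes H1 : Finset α} {k j : ℕ}
    (𝒯 : Finset (Finset α))
    (h𝒯 : 𝒯 = (Hpes.powersetCard k).filter (fun T => (T ∩ H1).card = j)) :
    ∑ a ∈ Hpes ∩ H1, (𝒯.filter (fun T => a ∈ T)).card = j * 𝒯.card := by
  have key : ∀ T ∈ 𝒯, ((Hpes ∩ H1).filter (fun a => a ∈ T)).card = j := by
    intro T hT
    rw [h𝒯, mem_filter, mem_powersetCard] at hT
    obtain ⟨⟨hsub, _⟩, hcard⟩ := hT
    rw [filter_mem_eq_inter]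
    rw [show Hpes ∩ H1 ∩ T = T ∩ H1 from by
      ext a; simp only [mem_inter]; constructor
      · rintro ⟨⟨_, b⟩, c⟩; exact ⟨c, b⟩
      · rintro ⟨a1, a2⟩; exact ⟨⟨hsub a1, a2⟩, a1⟩]
    exact hcard
  calc ∑ a ∈ Hpes ∩ H1, (𝒯.filter (fun T => a ∈ T)).card
      = ∑ a ∈ Hpes ∩ H1, ∑ T ∈ 𝒯, (if a ∈ T then 1 else 0) := by
        refine Finset.sum_congr rfl fun a _ => ?_
        rw [card_filter]
    _ = ∑ T ∈ 𝒯, ∑ a ∈ Hpes ∩ H1, (if a ∈ T then 1 else 0) := Finset.sum_comm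
    _ = ∑ T ∈ 𝒯, ((Hpes ∩ H1).filter (fun a => a ∈ T)).card := by
        refine Finset.sum_congr rfl fun T _ => ?_
        rw [card_filter]
    _ = ∑ T ∈ 𝒯, j := Finset.sum_congr rfl key
    _ = j * 𝒯.card := by rw [Finset.sum_const, smul_eq_mul, Nat.mul_comm]

/-- The `sample_household` subroutine returns each household of the unaudited set
`H¹` with probability exactly `1/|H¹|`. The surveyed PES households form a uniformly
random subset of `H_PES` of fixed size `k`, of which exactly `j` lie in `H¹`; with
probability `|H_PES ∩ H¹|/|H¹|` the subroutine returns a uniform element of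
(surveyed ∩ H¹), and otherwise a uniform element of `H¹ \ H_PES`. -/
theorem sample_household_uniform {α : Type*} [DecidableEq α]
    (H1 Hpes : Finset α) (hH1 : H1.Nonempty)
    (k j : ℕ) (hj : 1 ≤ j)
    (𝒯 : Finset (Finset α))
    (h𝒯 : 𝒯 = (Hpes.powersetCard k).filter (fun T => (T ∩ H1).card = j))
    (h𝒯ne : 𝒯.Nonempty)
    (Pr : α → ℝ)
    (hPr : ∀ h, Pr h =
      (((Hpes ∩ H1).card : ℝ) / (H1.card : ℝ)) *
          (∑ T ∈ 𝒯, (1 / (𝒯.card : ℝ)) * (if h ∈ T then 1 / (j : ℝ) else 0))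
        + (((H1 \ Hpes).card : ℝ) / (H1.card : ℝ)) *
          (if h ∈ H1 \ Hpes then 1 / ((H1 \ Hpes).card : ℝ) else 0)) :
    ∀ h ∈ H1, Pr h = 1 / (H1.card : ℝ) := by
  intro h hh
  have hH1c : (H1.card : ℝ) ≠ 0 := Nat.cast_ne_zero.mpr (card_pos.mpr hH1).ne'
  rw [hPr]
  by_cases hhp : h ∈ Hpes
  · -- PES branch
    have hhM : h ∈ Hpes ∩ H1 := mem_inter.mpr ⟨hhp, hh⟩
    have hmc : ((Hpes ∩ H1).card : ℝ) ≠ 0 :=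
      Nat.cast_ne_zero.mpr (card_pos.mpr ⟨h, hhM⟩).ne'
    have h𝒯c : ((𝒯.card : ℝ)) ≠ 0 := Nat.cast_ne_zero.mpr (card_pos.mpr h𝒯ne).ne'
    have hjc : ((j : ℝ)) ≠ 0 := Nat.cast_ne_zero.mpr (by omega)
    have hnot2 : h ∉ H1 \ Hpes := by simp [hhp]
    -- sum evaluates
    have hsum : (∑ T ∈ 𝒯, (1 / (𝒯.card : ℝ)) * (if h ∈ T then 1 / (j : ℝ) else 0))
        = ((𝒯.filter (fun T => h ∈ T)).card : ℝ) / ((𝒯.card : ℝ) * j) := by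
      rw [← Finset.sum_filter_add_sum_filter_not 𝒯 (fun T => h ∈ T)]
      have e2 : ∑ T ∈ 𝒯.filter (fun T => ¬ h ∈ T),
          (1 / (𝒯.card : ℝ)) * (if h ∈ T then 1 / (j : ℝ) else 0) = 0 := by
        refine Finset.sum_eq_zero fun T hT => ?_
        rw [mem_filter] at hT
        simp [hT.2]
      rw [e2, add_zero]
      have e1 : ∑ T ∈ 𝒯.filter (fun T => h ∈ T),
          (1 / (𝒯.card : ℝ)) * (if h ∈ T then 1 / (j : ℝ) else 0)
          = ∑ T ∈ 𝒯.filter (fun T => h ∈ T), (1 / (𝒯.card : ℝ)) * (1 / (j : ℝ)) := by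
        refine Finset.sum_congr rfl fun T hT => ?_
        rw [mem_filter] at hT
        simp [hT.2]
      rw [e1, Finset.sum_const, nsmul_eq_mul]
      field_simp
    -- the key counting identity
    have hkey : ((Hpes ∩ H1).card) * (𝒯.filter (fun T => h ∈ T)).card = j * 𝒯.card := by
      have := count_total 𝒯 h𝒯
      rw [← this]
      rw [Finset.sum_congr rfl (fun a ha => count_const 𝒯 h𝒯 ha hhM)]
      rw [Finset.sum_const, smul_eq_mul]
    have hkeyR : ((Hpes ∩ H1).card : ℝ) * ((𝒯.filter (fun T => h ∈ T)).card : ℝ)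
        = (j : ℝ) * (𝒯.card : ℝ) := by exact_mod_cast hkey
    rw [hsum, if_neg hnot2, mul_zero, add_zero]
    field_simp
    linear_combination hkeyR
  · -- non-PES branch
    have hmem : h ∈ H1 \ Hpes := mem_sdiff.mpr ⟨hh, hhp⟩
    have hdc : ((H1 \ Hpes).card : ℝ) ≠ 0 :=
      Nat.cast_ne_zero.mpr (card_pos.mpr ⟨h, hmem⟩).ne'
    have hsum : (∑ T ∈ 𝒯, (1 / (𝒯.card : ℝ)) * (if h ∈ T then 1 / (j : ℝ) else 0)) = 0 := by
      refine Finset.sum_eq_zero fun T hT => ?_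
      have : h ∉ T := by
        rw [h𝒯, mem_filter, mem_powersetCard] at hT
        exact fun hm => hhp (hT.1.1 hm)
      simp [this]
    rw [hsum, mul_zero, zero_add, if_pos hmem]
    field_simp
end
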